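/- Let a, N be integers with N > 0 and let f be a real-valued function defined on (a, a+N]. Then for every integer q > 0, (S_f(a, N))² ≤ (N − 1 + q)·( N/q + (2/q)·∑_{r=1}^{q−1} (1 − r/q)·S_{g_r}(a, N − r) ), where g_r(x) := f(x + r) − f(x). -/

import Mathlib

/-!
Shifting the summation variable by `r` for each `0 ≤ r < q` writes `q ∑ z n` as a sum of
`N + q - 1` window sums `∑_{r < q} z (m + r)`. Cauchy–Schwarz over the windows and expanding the
squares bound `q² |∑ z n|²` by `(N + q - 1) ∑_{r, s < q} |A (r - s)|`, where
`A h = ∑ z (n + h) conj (z n)` is the autocorrelation of `z`. Since `A (-h) = conj (A h)`, the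
difference `h` contributes `q - |h|` copies of `|A h|`. For `z = e ∘ f` on `(a, a + N]` one has
`A 0 = N`, and for `h > 0` the sum `A h` is the exponential sum of `f (x + h) - f x` over
`(a, a + N - h]`.
-/

open Real Complex

/-- The exponential sum `S_f(a, N) = |∑_{a < n ≤ a + N} e(f(n))|`, where `e(x) = exp(2πix)`
and the sum runs over integers `n`. -/
noncomputable def expSum (f : ℝ → ℝ) (a N : ℤ) : ℝ :=
  ‖∑ n ∈ Finset.Ioc a (a + N), Complex.exp (2 * Real.pi * Complex.I * (f n : ℂ))‖

open Finset Function ComplexConjugate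

section Autocorrelation

variable {G 𝕜 : Type*} [AddCommGroup G] [RCLike 𝕜]

noncomputable def autocorr (z : G → 𝕜) (h : G) : 𝕜 :=
  ∑ᶠ x, z (x + h) * conj (z x)

lemma autocorr_neg (z : G → 𝕜) (h : G) : autocorr z (-h) = conj (autocorr z h) := by
  rw [autocorr, autocorr, ← finsum_comp_equiv (Equiv.addRight h), starRingEnd_apply,
    ← starRingAut_apply, AddEquivClass.map_finsum]
  congr 1 with y
  simp [mul_comm]

variable {z : G → 𝕜} {R M : Finset G}

lemma sum_sum_add_eq_card_smul_finsum (hM : ∀ r ∈ R, support (fun m => z (m + r)) ⊆ M) :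
    ∑ m ∈ M, ∑ r ∈ R, z (m + r) = #R • ∑ᶠ x, z x := by
  rw [sum_comm, ← sum_const]
  refine sum_congr rfl fun r hr => ?_
  rw [← finsum_eq_sum_of_support_subset _ (hM r hr)]
  exact finsum_comp_equiv (Equiv.addRight r)

lemma sum_norm_sum_add_sq_eq (hM : ∀ r ∈ R, support (fun m => z (m + r)) ⊆ M) :
    ((∑ m ∈ M, ‖∑ r ∈ R, z (m + r)‖ ^ 2 : ℝ) : 𝕜) =
      ∑ r ∈ R, ∑ s ∈ R, autocorr z (r - s) := by
  push_cast
  simp_rw [← RCLike.mul_conj, map_sum, sum_mul_sum]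
  rw [sum_comm]
  refine sum_congr rfl fun r _ => ?_
  rw [sum_comm]
  refine sum_congr rfl fun s hs => ?_
  have hsupp : support (fun m => z (m + r) * conj (z (m + s))) ⊆ M := fun m hm =>
    hM s hs (by simpa using right_ne_zero_of_mul hm)
  rw [← finsum_eq_sum_of_support_subset _ hsupp, autocorr,
    ← finsum_comp_equiv (Equiv.addRight s) (f := fun x => z (x + (r - s)) * conj (z x))]
  simp only [Equiv.coe_addRight, add_add_sub_cancel]

theorem sq_card_mul_norm_finsum_le (hM : ∀ r ∈ R, support (fun m => z (m + r)) ⊆ M) :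
    (#R * ‖∑ᶠ x, z x‖) ^ 2 ≤ #M * ∑ r ∈ R, ∑ s ∈ R, ‖autocorr z (r - s)‖ := by
  have hsq : ∑ m ∈ M, ‖∑ r ∈ R, z (m + r)‖ ^ 2 ≤
      ∑ r ∈ R, ∑ s ∈ R, ‖autocorr z (r - s)‖ := by
    calc ∑ m ∈ M, ‖∑ r ∈ R, z (m + r)‖ ^ 2
        = ‖((∑ m ∈ M, ‖∑ r ∈ R, z (m + r)‖ ^ 2 : ℝ) : 𝕜)‖ := by
          rw [RCLike.norm_ofReal, abs_of_nonneg (by positivity)]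
      _ ≤ _ := by
          rw [sum_norm_sum_add_sq_eq hM]
          exact (norm_sum_le _ _).trans (sum_le_sum fun r _ => norm_sum_le _ _)
  calc (#R * ‖∑ᶠ x, z x‖) ^ 2 = ‖∑ m ∈ M, ∑ r ∈ R, z (m + r)‖ ^ 2 := by
        rw [sum_sum_add_eq_card_smul_finsum hM, nsmul_eq_mul, norm_mul, RCLike.norm_natCast]
    _ ≤ (∑ m ∈ M, ‖∑ r ∈ R, z (m + r)‖) ^ 2 := by gcongr; exact norm_sum_le _ _
    _ ≤ #M * ∑ m ∈ M, ‖∑ r ∈ R, z (m + r)‖ ^ 2 := sq_sum_le_card_mul_sum_sq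
    _ ≤ _ := by gcongr

end Autocorrelation

lemma sum_Ico_sum_Ico_sub_of_even {M : Type*} [AddCommGroup M] {F : ℤ → M}
    (hF : F.Even) {q : ℤ} (hq : 0 ≤ q) :
    ∑ r ∈ Ico 0 q, ∑ s ∈ Ico 0 q, F (r - s) =
      q • F 0 + 2 • ∑ t ∈ Ico 1 q, (q - t) • F t := by
  induction q, hq using Int.leInduction with
  | base => simp
  | succ q hq ih =>
    have hreflect : ∑ s ∈ Ico 0 q, F (q - s) = ∑ t ∈ Ico 1 (q + 1), F t :=
      sum_nbij' (q - ·) (q - ·) (by intro s hs; simp only [mem_Ico] at hs ⊢; omega)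
        (by intro t ht; simp only [mem_Ico] at ht ⊢; omega) (by simp) (by simp) (by simp)
    have hweights : ∑ t ∈ Ico 1 (q + 1), (q + 1 - t) • F t
        = ∑ t ∈ Ico 1 q, (q - t) • F t + ∑ t ∈ Ico 1 (q + 1), F t := by
      simp_rw [add_sub_right_comm q 1, add_smul, one_smul, sum_add_distrib]
      congr 1
      refine (sum_subset (Ico_subset_Ico_right (by omega)) fun t ht ht' => ?_).symm
      simp only [mem_Ico, not_and, not_lt] at ht ht'
      rw [show q - t = 0 by omega, zero_smul]
    rw [← insert_Ico_right_eq_Ico_add_one hq, sum_insert (by simp)]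
    simp_rw [sum_insert (show q ∉ Ico 0 q by simp)]
    have hsymm : ∑ r ∈ Ico 0 q, F (r - q) = ∑ s ∈ Ico 0 q, F (q - s) :=
      sum_congr rfl fun r _ => by rw [← hF, neg_sub]
    rw [sum_add_distrib, ih, hweights, ← hreflect, hsymm]
    simp only [sub_self, add_smul, one_smul, smul_add, two_smul]
    abel

theorem sq_mul_norm_finsum_le_of_support_subset_Ioc {𝕜 : Type*} [RCLike 𝕜] {z : ℤ → 𝕜}
    {a N q : ℤ} (hz : support z ⊆ Set.Ioc a (a + N)) (hN : 0 ≤ N) (hq : 0 < q) :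
    ((q : ℝ) * ‖∑ᶠ n, z n‖) ^ 2 ≤ ((N : ℝ) + q - 1) *
      (q * ‖autocorr z 0‖ + 2 * ∑ t ∈ Ico 1 q, ((q : ℝ) - t) * ‖autocorr z t‖) := by
  have hM : ∀ r ∈ Ico 0 q, support (fun m => z (m + r)) ⊆ ↑(Ioc (a - q + 1) (a + N)) := by
    intro r hr m hm
    have := hz hm
    simp only [mem_Ico, coe_Ioc, Set.mem_Ioc] at hr this ⊢
    omega
  have hcard_R : (#(Ico 0 q) : ℝ) = q := by
    rw [Int.card_Ico, sub_zero]
    exact_mod_cast Int.toNat_of_nonneg hq.le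
  have hcard_M : (#(Ioc (a - q + 1) (a + N)) : ℝ) = N + q - 1 := by
    rw [Int.card_Ioc, show a + N - (a - q + 1) = N + q - 1 by ring]
    exact_mod_cast Int.toNat_of_nonneg (by omega)
  have hcount := sum_Ico_sum_Ico_sub_of_even (F := fun t => ‖autocorr z t‖)
    (fun t => by simp only [autocorr_neg, RCLike.norm_conj]) hq.le
  have hvdc := sq_card_mul_norm_finsum_le hM
  rw [hcount, hcard_R, hcard_M] at hvdc
  simpa only [zsmul_eq_mul, nsmul_eq_mul, Int.cast_sub, Nat.cast_ofNat] using hvdc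

lemma autocorr_indicator_Ioc {𝕜 : Type*} [RCLike 𝕜] (w : ℤ → 𝕜) (a N : ℤ) {h : ℤ}
    (hh : 0 ≤ h) :
    autocorr ((Set.Ioc a (a + N)).indicator w) h =
      ∑ n ∈ Ioc a (a + (N - h)), w (n + h) * conj (w n) := by
  have hprod : ∀ n, (Set.Ioc a (a + N)).indicator w (n + h) *
      conj ((Set.Ioc a (a + N)).indicator w n) =
      (Ioc a (a + (N - h)) : Set ℤ).indicator (fun n => w (n + h) * conj (w n)) n := by
    intro n
    simp only [Set.indicator_apply, coe_Ioc, Set.mem_Ioc]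
    split_ifs <;> first | omega | simp
  rw [autocorr, funext hprod, ← finsum_mem_def, finsum_mem_coe_finset]

lemma expSum_zero (a : ℤ) {N : ℤ} (hN : 0 ≤ N) : expSum (fun _ => 0) a N = N := by
  simp only [expSum, ofReal_zero, mul_zero, Complex.exp_zero, sum_const, Int.card_Ioc,
    add_sub_cancel_left, nsmul_eq_mul, mul_one, RCLike.norm_natCast]
  exact_mod_cast Int.toNat_of_nonneg hN

lemma exp_two_pi_I_mul_conj (x y : ℝ) :
    exp (2 * π * I * x) * conj (exp (2 * π * I * y)) = exp (2 * π * I * (x - y : ℝ)) := by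
  rw [← Complex.exp_conj, ← Complex.exp_add]
  simp only [map_mul, Complex.conj_I, Complex.conj_ofReal, map_ofNat]
  push_cast
  ring_nf

/-- **Explicit `A` process (Weyl differencing).** For integers `a`, `N > 0`, any real-valued
`f` and any integer `q > 0`,
`S_f(a,N)² ≤ (N - 1 + q)(N/q + (2/q) ∑_{r=1}^{q-1} (1 - r/q) S_{g_r}(a, N - r))`,
where `g_r(x) = f(x + r) - f(x)`. -/
theorem weyl_differencing (a N : ℤ) (hN : 0 < N) (f : ℝ → ℝ) (q : ℤ) (hq : 0 < q) :
    (expSum f a N) ^ 2 ≤ ((N : ℝ) - 1 + q) *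
      ((N : ℝ) / q + 2 / q * ∑ r ∈ Finset.Ico (1 : ℤ) q,
        (1 - (r : ℝ) / q) * expSum (fun x => f (x + r) - f x) a (N - r)) := by
  set w : ℤ → ℂ := fun n => exp (2 * π * I * (f n : ℂ))
  set z := (Set.Ioc a (a + N)).indicator w
  have hS : expSum f a N = ‖∑ᶠ n, z n‖ := by
    rw [expSum, ← finsum_mem_coe_finset, finsum_mem_def, coe_Ioc]
  have hA : ∀ t, 0 ≤ t → ‖autocorr z t‖ = expSum (fun x => f (x + t) - f x) a (N - t) :=
    fun t ht => by
      simp only [z, autocorr_indicator_Ioc w a N ht, w, exp_two_pi_I_mul_conj, expSum,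
        Int.cast_add]
  have hA0 : ‖autocorr z 0‖ = N := by
    simpa only [hA 0 le_rfl, Int.cast_zero, add_zero, sub_self, sub_zero] using expSum_zero a hN.le
  have hvdc := sq_mul_norm_finsum_le_of_support_subset_Ioc
    (Set.support_indicator_subset : support z ⊆ _) hN.le hq
  rw [← hS, hA0, sum_congr rfl fun t ht => by
    rw [hA t (one_pos.trans_le (mem_Ico.mp ht).1).le]] at hvdc
  have hweights :
      ∑ t ∈ Ico 1 q, (1 - (t : ℝ) / q) * expSum (fun x => f (x + t) - f x) a (N - t) =
        (∑ t ∈ Ico 1 q, ((q : ℝ) - t) * expSum (fun x => f (x + t) - f x) a (N - t)) / q := by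
    rw [sum_div]
    exact sum_congr rfl fun t _ => by field_simp
  rw [hweights]
  calc expSum f a N ^ 2 = ((q : ℝ) * expSum f a N) ^ 2 / (q : ℝ) ^ 2 := by field_simp
    _ ≤ _ := div_le_div_of_nonneg_right hvdc (by positivity)
    _ = _ := by field_simp; ring
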